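/- Window characterization: let w be an evaluation model whose time map is strictly increasing, and let p be a finite sequence of pairs (t, v) ∈ ℕ × 𝕍 whose timestamps are strictly increasing. Then for every real t_start ∈ ℝ, window(w, p, t_start) is a suffix of p and contains exactly those pairs (t, v) of p with w(t) > t_start. -/

import Mathlib

/-! `window` is `List.rtakeWhile` for the predicate `tstart < time t`. Since both the timestamps
and `time` are increasing, this predicate, once true along `p`, stays true, so the longest suffix
on which it holds contains every element satisfying it. -/

namespace RTLola

open Classical in
/-- Helper for `window`, working on the reversed sequence: keep elements as long as their
real time exceeds `tstart`. -/
noncomputable def windowRevAux {V : Type} (time : ℕ → ℝ) (tstart : ℝ) :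
    List (ℕ × V) → List (ℕ × V)
  | [] => []
  | tv :: rest => if tstart < time tv.1 then tv :: windowRevAux time tstart rest else []

/-- The window of a sequence `p` of timestamped values, defined recursively from the right:
`window (p' · (t,v)) tstart = window p' tstart · (t,v)` if `time t > tstart`, and `ε`
otherwise. -/
noncomputable def window {V : Type} (time : ℕ → ℝ) (p : List (ℕ × V)) (tstart : ℝ) :
    List (ℕ × V) :=
  (windowRevAux time tstart p.reverse).reverse

end RTLola

namespace List

variable {α : Type*} {p : α → Bool} {l : List α}

theorem mem_takeWhile_iff_of_pairwise (h : l.Pairwise fun a b => p b → p a) {x : α} :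
    x ∈ l.takeWhile p ↔ x ∈ l ∧ p x := by
  induction l with
  | nil => simp
  | cons a l ih =>
    rw [pairwise_cons] at h
    by_cases ha : p a
    · rw [takeWhile_cons_of_pos ha, mem_cons, mem_cons, ih h.2, or_and_right]
      exact or_congr_left ⟨fun hx => ⟨hx, hx ▸ ha⟩, And.left⟩
    · simp only [takeWhile_cons_of_neg ha, not_mem_nil, false_iff, mem_cons, not_and]
      rintro (rfl | hx) hpx
      exacts [ha hpx, ha (h.1 x hx hpx)]

theorem mem_rtakeWhile_iff_of_pairwise (h : l.Pairwise fun a b => p a → p b) {x : α} :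
    x ∈ l.rtakeWhile p ↔ x ∈ l ∧ p x := by
  rw [rtakeWhile, mem_reverse, mem_takeWhile_iff_of_pairwise, mem_reverse]
  rwa [pairwise_reverse]

end List

namespace RTLola

theorem windowRevAux_eq_takeWhile {V : Type} (time : ℕ → ℝ) (tstart : ℝ) (l : List (ℕ × V)) :
    windowRevAux time tstart l = l.takeWhile fun tv => tstart < time tv.1 := by
  induction l with
  | nil => rfl
  | cons tv l ih => by_cases h : tstart < time tv.1 <;> simp [windowRevAux, h, ih]

theorem window_eq_rtakeWhile {V : Type} (time : ℕ → ℝ) (p : List (ℕ × V)) (tstart : ℝ) :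
    window time p tstart = p.rtakeWhile fun tv => tstart < time tv.1 := by
  rw [window, windowRevAux_eq_takeWhile, List.rtakeWhile]

/-- Window characterization: if the time map of the evaluation model is strictly increasing
and the timestamps of `p` are strictly increasing, then for every real `tstart`,
`window time p tstart` is a suffix of `p` and contains exactly those pairs `(t, v)` of `p`
with `time t > tstart`. -/
theorem window_characterization {V : Type} (time : ℕ → ℝ) (htime : StrictMono time)
    (p : List (ℕ × V)) (hp : (p.map Prod.fst).Pairwise (· < ·)) (tstart : ℝ) :
    (window time p tstart) <:+ p ∧
    (∀ tv : ℕ × V, tv ∈ window time p tstart ↔ tv ∈ p ∧ tstart < time tv.1) := by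
  have hpersists : p.Pairwise fun a b => decide (tstart < time a.1) → decide (tstart < time b.1) :=
    (List.pairwise_map.mp hp).imp fun hab ha => by
      simpa using (of_decide_eq_true ha).trans (htime hab)
  rw [window_eq_rtakeWhile]
  refine ⟨List.rtakeWhile_suffix _ _, fun tv => ?_⟩
  simpa using List.mem_rtakeWhile_iff_of_pairwise hpersists (x := tv)

end RTLola
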